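/- arXiv:2206.10047 — 2 statements merged into one kernel-verified Lean document; each statement's English description precedes it below -/
import Mathlib

section
/- In the quasi-staircase subshift, for every n ≥ 1: every suffix of 1^{c_n}(B_n 1^{c_n})^{a_n} is right-special; for every 0 < i < b_n, every suffix of 1^{c_n+i−1}(B_n 1^{c_n+i})^{a_n} is right-special; and every suffix of 1^{c_n+b_n−1} B_n 1^{c_n} is right-special. -/
open Filter MeasureTheory
open scoped ENNReal

/-- `n`-fold concatenation (power) of a word. -/
def wpow {α : Type*} (v : List α) (n : ℕ) : List α := (List.replicate n v).flatten

/-- The word `1^k` over the alphabet `{0,1}` (with `0 = false`, `1 = true`). -/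
def ones (k : ℕ) : List Bool := List.replicate k true

/-- The left shift on biinfinite sequences. -/
def shift {A : Type*} (x : ℤ → A) : ℤ → A := fun n => x (n + 1)

/-- The word `x_{[s, s+len)}` read off a biinfinite sequence. -/
def readWord {A : Type*} (x : ℤ → A) (s : ℤ) (len : ℕ) : List A :=
  (List.range len).map (fun i => x (s + (i : ℤ)))

/-- A finite word occurs (as a consecutive subword) in a biinfinite sequence. -/
def occursIn {A : Type*} (w : List A) (x : ℤ → A) : Prop :=
  ∃ k : ℤ, readWord x k w.length = w

/-- The quasi-staircase words: `B 1 = 0` and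
`B (n+1) = (∏_{i=0}^{b n - 1} (B n · 1^{c n + i})^{a n}) · B n`. -/
def qsB (a b c : ℕ → ℕ) : ℕ → List Bool
  | 0 => []
  | 1 => [false]
  | (n+2) =>
      ((List.range (b (n+1))).map
        (fun i => wpow (qsB a b c (n+1) ++ ones (c (n+1) + i)) (a (n+1)))).flatten
        ++ qsB a b c (n+1)

/-- The language of the quasi-staircase subshift: all subwords of some `B n`, `n ≥ 1`. -/
def qsL (a b c : ℕ → ℕ) : Set (List Bool) :=
  {w | ∃ n, 1 ≤ n ∧ w <:+: qsB a b c n}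

/-- The quasi-staircase subshift: biinfinite sequences all of whose finite subwords
lie in the language. -/
def qsX (a b c : ℕ → ℕ) : Set (ℤ → Bool) :=
  {x | ∀ w : List Bool, occursIn w x → w ∈ qsL a b c}

/-- Right-special words of the quasi-staircase subshift: `w`, `w0` and `w1` all lie
in the language. -/
def RS (a b c : ℕ → ℕ) (w : List Bool) : Prop :=
  w ∈ qsL a b c ∧ (w ++ [false]) ∈ qsL a b c ∧ (w ++ [true]) ∈ qsL a b c

/-- The tail length `z(w)`: the number of `1`s at the end of `w`. -/
def ztail (w : List Bool) : ℕ := (w.reverse.takeWhile id).length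

/-- The level-`n` generating words: right-special words containing a `0` whose tail
length lies in `[c n, c (n+1))`. -/
def Wn (a b c : ℕ → ℕ) (n : ℕ) : Set (List Bool) :=
  {w | RS a b c w ∧ false ∈ w ∧ c n ≤ ztail w ∧ ztail w < c (n+1)}

/-- The word complexity of the quasi-staircase subshift. -/
noncomputable def cplx (a b c : ℕ → ℕ) (q : ℕ) : ℕ :=
  Set.ncard {w | w ∈ qsL a b c ∧ w.length = q}

/-- The level-`n` complexity functions. -/
noncomputable def cplxn (a b c : ℕ → ℕ) (n q : ℕ) : ℕ :=
  Set.ncard {w | w ∈ Wn a b c n ∧ w.length < q}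

/-- The height sequence of the quasi-staircase: `h n = |B n|`. -/
def qsh (a b c : ℕ → ℕ) : ℕ → ℕ
  | 0 => 0
  | 1 => 1
  | (n+2) => (a (n+1) * b (n+1) + 1) * qsh a b c (n+1)
      + a (n+1) * b (n+1) * c (n+1) + a (n+1) * b (n+1) * (b (n+1) - 1) / 2

/-- The post-productive sequence `m n = a n * h n + (a n + 1) * (c n + b n - 1)`. -/
def qsm (a b c : ℕ → ℕ) (n : ℕ) : ℕ :=
  a n * qsh a b c n + (a n + 1) * (c n + b n - 1)

/-- The standing quasi-staircase hypotheses: `a`, `b`, `c` are nondecreasing sequences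
of positive integers (for `n ≥ 1`) tending to infinity, with `c 1 ≥ 1` and
`c (n+1) ≥ c n + b n` for all `n ≥ 1`. -/
def QShyp (a b c : ℕ → ℕ) : Prop :=
  (∀ n, 1 ≤ n → 1 ≤ a n ∧ a n ≤ a (n+1)) ∧ Tendsto a atTop atTop ∧
  (∀ n, 1 ≤ n → 1 ≤ b n ∧ b n ≤ b (n+1)) ∧ Tendsto b atTop atTop ∧
  (∀ n, 1 ≤ n → 1 ≤ c n ∧ c n ≤ c (n+1)) ∧ Tendsto c atTop atTop ∧
  (∀ n, 1 ≤ n → c n + b n ≤ c (n+1))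

set_option linter.unnecessarySeqFocus false

lemma qsB_succ_eq (a b c : ℕ → ℕ) {n : ℕ} (hn : 1 ≤ n) :
    qsB a b c (n+1) = ((List.range (b n)).map
      (fun i => wpow (qsB a b c n ++ ones (c n + i)) (a n))).flatten ++ qsB a b c n := by
  obtain ⟨m, rfl⟩ : ∃ m, n = m + 1 := ⟨n-1, by omega⟩
  rfl
lemma wpow_succ {α} (v : List α) (k) : wpow v (k+1) = v ++ wpow v k := by
  simp [wpow, List.replicate_succ]
lemma wpow_succ' {α} (v : List α) (k) : wpow v (k+1) = wpow v k ++ v := by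
  rw [wpow, List.replicate_succ', List.flatten_append]; simp [wpow]
lemma ones_add (j k) : ones (j+k) = ones j ++ ones k := by
  rw [ones, List.replicate_add]; rfl
lemma flatten_map_range_add (G : ℕ → List Bool) (p q : ℕ) :
    ((List.range (p+q)).map G).flatten
      = ((List.range p).map G).flatten ++ ((List.range q).map (fun j => G (p+j))).flatten := by
  rw [List.range_add]; simp only [List.map_append, List.flatten_append, List.map_map]; rfl
lemma split3 (G : ℕ → List Bool) {i q : ℕ} (h : i < q) :
    ((List.range q).map G).flatten
      = ((List.range i).map G).flatten ++ G i
        ++ ((List.range (q - (i+1))).map (fun j => G ((i+1) + j))).flatten := by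
  have hq : q = i + (1 + (q - (i+1))) := by omega
  nth_rewrite 1 [hq]
  rw [flatten_map_range_add, flatten_map_range_add (fun j => G (i + j)) 1]
  rw [show List.range 1 = [0] from rfl]
  simp only [List.map_cons, List.map_nil, List.flatten_cons, List.flatten_nil,
    List.append_nil, Nat.add_zero, ← Nat.add_assoc, List.append_assoc]

section
variable {a b c : ℕ → ℕ}

lemma head_false (ha : ∀ k, 1 ≤ k → 1 ≤ a k) (hb : ∀ k, 1 ≤ k → 1 ≤ b k) :
    ∀ n, 1 ≤ n → ∃ u, qsB a b c n = false :: u := by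
  intro n
  induction n with
  | zero => intro h; omega
  | succ m ih =>
    intro _
    rcases Nat.eq_zero_or_pos m with rfl | hm
    · exact ⟨[], rfl⟩
    · obtain ⟨u, hu⟩ := ih hm
      obtain ⟨aa, haa⟩ : ∃ x, a m = x + 1 := ⟨a m - 1, by have := ha m hm; omega⟩
      obtain ⟨bb, hbb⟩ : ∃ x, b m = x + 1 := ⟨b m - 1, by have := hb m hm; omega⟩
      rw [qsB_succ_eq a b c hm, hbb, List.range_succ_eq_map, List.map_cons, List.flatten_cons,
        haa, wpow_succ, hu]
      exact ⟨_, by simp <;> rfl⟩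

lemma tail_head (ha : ∀ k, 1 ≤ k → 1 ≤ a k) {n : ℕ} (hn : 1 ≤ n) {u : List Bool}
    (hBu : qsB a b c n = false :: u) (f : ℕ → ℕ) (l : List ℕ) :
    ∃ w, (l.map (fun i => wpow (qsB a b c n ++ ones (f i)) (a n))).flatten ++ qsB a b c n
      = false :: w := by
  cases l with
  | nil => exact ⟨u, by simpa using hBu⟩
  | cons j l' =>
    obtain ⟨aa, haa⟩ : ∃ x, a n = x + 1 := ⟨a n - 1, by have := ha n hn; omega⟩
    rw [List.map_cons, List.flatten_cons, haa, wpow_succ, hBu]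
    exact ⟨_, by simp <;> rfl⟩

lemma D1 (ha : ∀ k, 1 ≤ k → 1 ≤ a k) (hb : ∀ k, 1 ≤ k → 1 ≤ b k) {n : ℕ} (hn : 1 ≤ n) :
    ∃ t, qsB a b c (n+1) = qsB a b c n ++ ones (c n) ++ qsB a b c n ++ t := by
  obtain ⟨aa, haa⟩ : ∃ x, a n = x + 1 := ⟨a n - 1, by have := ha n hn; omega⟩
  obtain ⟨bb, hbb⟩ : ∃ x, b n = x + 1 := ⟨b n - 1, by have := hb n hn; omega⟩
  rw [qsB_succ_eq a b c hn, hbb, List.range_succ_eq_map, List.map_cons, List.flatten_cons,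
    haa, wpow_succ]
  simp only [Nat.add_zero]
  cases aa with
  | succ aa' =>
    rw [wpow_succ]
    exact ⟨_, by simp <;> rfl⟩
  | zero =>
    cases bb with
    | zero =>
      refine ⟨[], ?_⟩
      simp [wpow]
    | succ bb' =>
      rw [List.range_succ_eq_map]
      simp only [List.map_cons, List.flatten_cons, wpow]
      exact ⟨_, by simp <;> rfl⟩

lemma Dpre (ha : ∀ k, 1 ≤ k → 1 ≤ a k) (hb : ∀ k, 1 ≤ k → 1 ≤ b k) {n : ℕ} (hn : 1 ≤ n) :
    ∃ u, qsB a b c (n+1) = wpow (qsB a b c n ++ ones (c n)) (a n) ++ false :: u := by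
  obtain ⟨u0, hu0⟩ := head_false ha hb n hn
  obtain ⟨bb, hbb⟩ : ∃ x, b n = x + 1 := ⟨b n - 1, by have := hb n hn; omega⟩
  rw [qsB_succ_eq a b c hn, hbb, List.range_succ_eq_map, List.map_cons, List.flatten_cons]
  obtain ⟨w, hw⟩ := tail_head (a:=a) (b:=b) (c:=c) ha hn hu0 (fun i => c n + i)
    (List.map Nat.succ (List.range bb))
  rw [List.append_assoc, hw]
  simp only [Nat.add_zero]
  exact ⟨w, rfl⟩

lemma D2 (ha : ∀ k, 1 ≤ k → 1 ≤ a k) (hb : ∀ k, 1 ≤ k → 1 ≤ b k) {n : ℕ} (hn : 1 ≤ n) :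
    ∃ s, qsB a b c (n+1) = s ++ ones (c n + b n - 1) ++ qsB a b c n := by
  obtain ⟨aa, haa⟩ : ∃ x, a n = x + 1 := ⟨a n - 1, by have := ha n hn; omega⟩
  obtain ⟨bb, hbb⟩ : ∃ x, b n = x + 1 := ⟨b n - 1, by have := hb n hn; omega⟩
  rw [qsB_succ_eq a b c hn, hbb, List.range_succ, List.map_append, List.flatten_append, haa]
  simp only [List.map_cons, List.map_nil, List.flatten_cons, List.flatten_nil, List.append_nil]
  rw [wpow_succ']
  rw [show c n + (bb+1) - 1 = c n + bb from by omega]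
  refine ⟨((List.range bb).map (fun i => wpow (qsB a b c n ++ ones (c n + i)) (aa+1))).flatten
    ++ wpow (qsB a b c n ++ ones (c n + bb)) aa ++ qsB a b c n, ?_⟩
  simp

end

section
variable {a b c : ℕ → ℕ}

lemma qsL_mono {w v : List Bool} (h : w <:+: v) (hv : v ∈ qsL a b c) : w ∈ qsL a b c := by
  obtain ⟨N, hN, hi⟩ := hv; exact ⟨N, hN, h.trans hi⟩

lemma rs_suffix {v w : List Bool} (h : RS a b c v) (hs : w <:+ v) : RS a b c w := by
  obtain ⟨s, rfl⟩ := hs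
  obtain ⟨h0, hf, ht⟩ := h
  exact ⟨qsL_mono ⟨s, [], by simp⟩ h0, qsL_mono ⟨s, [], by simp⟩ hf,
    qsL_mono ⟨s, [], by simp⟩ ht⟩

lemma memX (ha : ∀ k, 1 ≤ k → 1 ≤ a k) (hb : ∀ k, 1 ≤ k → 1 ≤ b k)
    (hcb : ∀ k, 1 ≤ k → c k + b k ≤ c (k+1)) {n : ℕ} (hn : 1 ≤ n) {i : ℕ} (hi : i < b n) :
    (wpow (qsB a b c n ++ ones (c n + i)) (a n) ++ qsB a b c n ++ ones (c n + i + 1))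
      ∈ qsL a b c := by
  obtain ⟨aa, haa⟩ : ∃ x, a n = x + 1 := ⟨a n - 1, by have := ha n hn; omega⟩
  by_cases h2 : i + 1 < b n
  · obtain ⟨r, hr⟩ : ∃ r, b n - (i+1) = r + 1 := ⟨b n - (i+2), by omega⟩
    refine ⟨n+1, by omega, ?_⟩
    rw [qsB_succ_eq a b c hn, split3 _ hi, hr, List.range_succ_eq_map, List.map_cons,
      List.flatten_cons]
    exact ⟨((List.range i).map (fun j => wpow (qsB a b c n ++ ones (c n + j)) (a n))).flatten,
      _, by (simp only [haa, wpow_succ, Nat.add_zero, ← Nat.add_assoc, List.append_assoc,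
        List.cons_append, List.singleton_append]) <;> rfl⟩
  · have hib : i + 1 = b n := by omega
    obtain ⟨t1, e1⟩ := D1 (a:=a) (b:=b) (c:=c) ha hb (n := n+1) (by omega)
    refine ⟨n+2, by omega, ?_⟩
    rw [e1, qsB_succ_eq a b c hn, split3 _ hi, show b n - (i+1) = 0 from by omega,
      show ones (c (n+1)) = ones (c n + i + 1) ++ ones (c (n+1) - (c n + i + 1)) from by
        rw [← ones_add]; congr 1; have := hcb n hn; omega]
    exact ⟨((List.range i).map (fun j => wpow (qsB a b c n ++ ones (c n + j)) (a n))).flatten,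
      _, by (simp only [haa, wpow_succ, Nat.add_zero, ← Nat.add_assoc, List.range_zero,
        List.map_nil, List.flatten_nil, List.append_nil, List.append_assoc, List.cons_append,
        List.singleton_append]) <;> rfl⟩

lemma memY (ha : ∀ k, 1 ≤ k → 1 ≤ a k) (hb : ∀ k, 1 ≤ k → 1 ≤ b k)
    (hcb : ∀ k, 1 ≤ k → c k + b k ≤ c (k+1)) {n : ℕ} (hn : 1 ≤ n) {i : ℕ} (hi : i < b n) :
    (ones (c n + i) ++ wpow (qsB a b c n ++ ones (c n + i)) (a n) ++ [true]) ∈ qsL a b c := by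
  refine qsL_mono ⟨qsB a b c n, [], ?_⟩ (memX ha hb hcb hn hi)
  have swap : ∀ (v : List Bool) m, v ++ wpow v m = wpow v m ++ v := fun v m => by
    rw [← wpow_succ, wpow_succ']
  rw [show ones (c n + i + 1) = ones (c n + i) ++ [true] from by rw [ones_add]; rfl]
  simp only [List.append_nil, ← List.append_assoc]
  rw [swap (qsB a b c n ++ ones (c n + i)) (a n)]
  simp [List.append_assoc]

end
section
variable {a b c : ℕ → ℕ}

lemma mem_W1_false (ha : ∀ k, 1 ≤ k → 1 ≤ a k) (hb : ∀ k, 1 ≤ k → 1 ≤ b k)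
    (hcb : ∀ k, 1 ≤ k → c k + b k ≤ c (k+1)) {n : ℕ} (hn : 1 ≤ n) :
    (ones (c n) ++ wpow (qsB a b c n ++ ones (c n)) (a n) ++ [false]) ∈ qsL a b c := by
  obtain ⟨u, e2⟩ := Dpre (a:=a) (b:=b) (c:=c) ha hb hn
  obtain ⟨t1, e1⟩ := D1 (a:=a) (b:=b) (c:=c) ha hb (n := n+1) (by omega)
  have hcc : ones (c (n+1)) = ones (c (n+1) - c n) ++ ones (c n) := by
    rw [← ones_add]; congr 1; have := hcb n hn; have := hb n hn; omega
  refine ⟨n+2, by omega, ?_⟩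
  rw [e1, e2, hcc]
  exact ⟨(wpow (qsB a b c n ++ ones (c n)) (a n) ++ false :: u) ++ ones (c (n+1) - c n), _,
    by (simp only [List.append_assoc, List.cons_append, List.singleton_append]) <;> rfl⟩

lemma mem_W2_false (ha : ∀ k, 1 ≤ k → 1 ≤ a k) (hb : ∀ k, 1 ≤ k → 1 ≤ b k)
    {n : ℕ} (hn : 1 ≤ n) {i : ℕ} (hi0 : 0 < i) (hib : i < b n) :
    (ones (c n + i - 1) ++ wpow (qsB a b c n ++ ones (c n + i)) (a n) ++ [false])
      ∈ qsL a b c := by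
  obtain ⟨i', rfl⟩ : ∃ i', i = i' + 1 := ⟨i - 1, by omega⟩
  obtain ⟨aa, haa⟩ : ∃ x, a n = x + 1 := ⟨a n - 1, by have := ha n hn; omega⟩
  obtain ⟨u0, hu0⟩ := head_false (a:=a) (b:=b) (c:=c) ha hb n hn
  obtain ⟨w, hw⟩ := tail_head (a:=a) (b:=b) (c:=c) ha hn hu0
    (fun j => c n + (i' + 1 + 1 + j)) (List.range (b n - (i' + 1 + 1)))
  refine ⟨n+1, by omega, ?_⟩
  rw [show c n + (i' + 1) - 1 = c n + i' from by omega, qsB_succ_eq a b c hn, split3 _ hib,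
    List.range_succ, List.map_append, List.flatten_append]
  refine ⟨((List.range i').map (fun j => wpow (qsB a b c n ++ ones (c n + j)) (a n))).flatten
      ++ wpow (qsB a b c n ++ ones (c n + i')) aa ++ qsB a b c n, w, ?_⟩
  simp only [haa, wpow_succ'] at hw
  simp only [haa, wpow_succ', List.map_cons, List.map_nil, List.flatten_cons,
    List.flatten_nil, List.append_nil, List.nil_append, List.append_assoc, hw,
    List.cons_append, List.singleton_append]

lemma mem_W3_false (ha : ∀ k, 1 ≤ k → 1 ≤ a k) (hb : ∀ k, 1 ≤ k → 1 ≤ b k)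
    (hcb : ∀ k, 1 ≤ k → c k + b k ≤ c (k+1)) {n : ℕ} (hn : 1 ≤ n) :
    (ones (c n + b n - 1) ++ qsB a b c n ++ ones (c n) ++ [false]) ∈ qsL a b c := by
  obtain ⟨t1, e1⟩ := D1 (a:=a) (b:=b) (c:=c) ha hb (n := n+1) (by omega)
  obtain ⟨t2, e2⟩ := D1 (a:=a) (b:=b) (c:=c) ha hb hn
  obtain ⟨u, hu⟩ := head_false (a:=a) (b:=b) (c:=c) ha hb n hn
  have hsplit : ones (c (n+1)) = ones (c (n+1) - (c n + b n - 1)) ++ ones (c n + b n - 1) := by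
    rw [← ones_add]; congr 1; have := hcb n hn; have := hb n hn; omega
  refine ⟨n+2, by omega, ?_⟩
  rw [e1, e2, hsplit, hu]
  exact ⟨(false :: u ++ ones (c n) ++ false :: u ++ t2) ++ ones (c (n+1) - (c n + b n - 1)),
    _, by (simp only [List.append_assoc, List.cons_append, List.singleton_append]) <;> rfl⟩

lemma mem_W3_true (ha : ∀ k, 1 ≤ k → 1 ≤ a k) (hb : ∀ k, 1 ≤ k → 1 ≤ b k)
    (hcb : ∀ k, 1 ≤ k → c k + b k ≤ c (k+1)) {n : ℕ} (hn : 1 ≤ n) :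
    (ones (c n + b n - 1) ++ qsB a b c n ++ ones (c n) ++ [true]) ∈ qsL a b c := by
  obtain ⟨s2, e2⟩ := D2 (a:=a) (b:=b) (c:=c) ha hb hn
  obtain ⟨t1, e1⟩ := D1 (a:=a) (b:=b) (c:=c) ha hb (n := n+1) (by omega)
  have hsplit : ones (c (n+1)) = ones (c n) ++ [true] ++ ones (c (n+1) - c n - 1) := by
    rw [show c (n+1) = c n + 1 + (c (n+1) - c n - 1) from by
        have := hcb n hn; have := hb n hn; omega,
      ones_add, ones_add, show ones 1 = [true] from rfl]
    congr 2
    omega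
  refine ⟨n+2, by omega, ?_⟩
  rw [e1, e2, hsplit]
  exact ⟨s2, _,
    by (simp only [List.append_assoc, List.cons_append, List.singleton_append]) <;> rfl⟩

end

/-- In the quasi-staircase subshift, for every `n ≥ 1`: every suffix of
`1^{c n} (B n 1^{c n})^{a n}` is right-special; for every `0 < i < b n`, every suffix
of `1^{c n + i - 1} (B n 1^{c n + i})^{a n}` is right-special; and every suffix of
`1^{c n + b n - 1} B n 1^{c n}` is right-special. -/
theorem qs_suffixes_right_special (a b c : ℕ → ℕ) (hQS : QShyp a b c)
    (n : ℕ) (hn : 1 ≤ n) :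
    (∀ w : List Bool,
      w <:+ ones (c n) ++ wpow (qsB a b c n ++ ones (c n)) (a n) → RS a b c w) ∧
    (∀ i, 0 < i → i < b n → ∀ w : List Bool,
      w <:+ ones (c n + i - 1) ++ wpow (qsB a b c n ++ ones (c n + i)) (a n) →
      RS a b c w) ∧
    (∀ w : List Bool,
      w <:+ ones (c n + b n - 1) ++ qsB a b c n ++ ones (c n) → RS a b c w) := by
  obtain ⟨ha', -, hb', -, hc', -, hcb⟩ := hQS
  have ha : ∀ k, 1 ≤ k → 1 ≤ a k := fun k hk => (ha' k hk).1
  have hb : ∀ k, 1 ≤ k → 1 ≤ b k := fun k hk => (hb' k hk).1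
  refine ⟨fun w hw => rs_suffix ?_ hw, fun i hi0 hib w hw => rs_suffix ?_ hw,
    fun w hw => rs_suffix ?_ hw⟩
  · have hf : ((ones (c n) ++ wpow (qsB a b c n ++ ones (c n)) (a n)) ++ [false])
        ∈ qsL a b c := by
      simpa [List.append_assoc] using mem_W1_false (a:=a) (b:=b) (c:=c) ha hb hcb hn
    have ht : ((ones (c n) ++ wpow (qsB a b c n ++ ones (c n)) (a n)) ++ [true])
        ∈ qsL a b c := by
      have := memY (a:=a) (b:=b) (c:=c) ha hb hcb hn (i := 0) (by have := hb n hn; omega)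
      simpa [List.append_assoc] using this
    exact ⟨qsL_mono ⟨[], [false], by simp⟩ hf, hf, ht⟩
  · have hf : ((ones (c n + i - 1) ++ wpow (qsB a b c n ++ ones (c n + i)) (a n)) ++ [false])
        ∈ qsL a b c := by
      simpa [List.append_assoc] using mem_W2_false (a:=a) (b:=b) (c:=c) ha hb hn hi0 hib
    have ht : ((ones (c n + i - 1) ++ wpow (qsB a b c n ++ ones (c n + i)) (a n)) ++ [true])
        ∈ qsL a b c := by
      refine qsL_mono ⟨ones 1, [], ?_⟩ (memY (a:=a) (b:=b) (c:=c) ha hb hcb hn hib)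
      rw [show ones (c n + i) = ones 1 ++ ones (c n + i - 1) from by
        rw [← ones_add]; congr 1; omega]
      simp [List.append_assoc]
    exact ⟨qsL_mono ⟨[], [false], by simp⟩ hf, hf, ht⟩
  · have hf : ((ones (c n + b n - 1) ++ qsB a b c n ++ ones (c n)) ++ [false]) ∈ qsL a b c := by
      simpa [List.append_assoc] using mem_W3_false (a:=a) (b:=b) (c:=c) ha hb hcb hn
    have ht : ((ones (c n + b n - 1) ++ qsB a b c n ++ ones (c n)) ++ [true]) ∈ qsL a b c := by
      simpa [List.append_assoc] using mem_W3_true (a:=a) (b:=b) (c:=c) ha hb hcb hn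
    exact ⟨qsL_mono ⟨[], [false], by simp⟩ hf, hf, ht⟩
end

section
/- Let f : ℕ → ℕ be any function with f(q) → ∞ as q → ∞. Then there exist nondecreasing sequences of positive integers (a_n), (b_n), (c_n), each tending to infinity, with c_1 ≥ 1 and c_{n+1} ≥ c_n + b_n for all n, such that a_n b_n² / h_n → 0, Σ_n (c_n + b_n)/h_n < ∞, and the word complexity p of the associated quasi-staircase subshift satisfies p(q)/(q·f(q)) → 0 as q → ∞. -/
open Filter MeasureTheory
open scoped ENNReal

/-!
Words of length `q` with `c n < q ≤ c (n+1)` all occur in `1^q B (n+1) 1^q`, since every block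
of ones in a later `B m` is at least `c (n+1) ≥ q` long. If `|B n| + c n ≤ q`, the padding and
each of the `b n` periodic runs `(B n 1^{c n + i})^{a n}` of `B (n+1)` contribute `O(q)` such
words; if not, passing from `B n` to `B (n+1)` only adds the at most `q · b n` words straddling a
block of ones. Choosing `c (n+1) ≥ h n + c n` makes one such step suffice, so `p q = O(q · b n)`.
With `a n = 2 ^ n` the heights grow fast enough for both conditions on `h`, and letting `b` grow
only once `f ≥ b n ^ 2` on `[n, ∞)` gives `p q / (q f q) = O(1 / b n) → 0`.
-/

open Topology

namespace QuasiStaircase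

section Words

variable {α : Type*}

theorem wpow_succ (v : List α) (n : ℕ) : wpow v (n + 1) = v ++ wpow v n := by
  simp [wpow, List.replicate_succ]

theorem wpow_succ' (v : List α) (n : ℕ) : wpow v (n + 1) = wpow v n ++ v := by
  simp [wpow, List.replicate_succ']

theorem length_wpow (v : List α) (n : ℕ) : (wpow v n).length = n * v.length := by
  induction n with
  | zero => simp [wpow]
  | succ n ih => rw [wpow_succ', List.length_append, ih, Nat.succ_mul]

def window (X : List α) (q s : ℕ) : List α := (X.drop s).take q

theorem window_infix (X : List α) (q s : ℕ) : window X q s <:+: X :=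
  ((X.drop s).take_prefix q).isInfix.trans (X.drop_suffix s).isInfix

theorem exists_window_eq {w X : List α} (h : w <:+: X) :
    ∃ s, s + w.length ≤ X.length ∧ window X w.length s = w := by
  obtain ⟨u, t, rfl⟩ := h
  exact ⟨u.length, by simp, by simp [window]⟩

theorem window_append_of_le {X : List α} (Y : List α) {q s : ℕ} (h : s + q ≤ X.length) :
    window (X ++ Y) q s = window X q s := by
  simp only [window, List.drop_append, List.take_append]
  rw [Nat.sub_eq_zero_of_le (by omega : s ≤ X.length), List.drop_zero,
    Nat.sub_eq_zero_of_le (by simp; omega : q ≤ (X.drop s).length)]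
  simp

theorem window_append_of_ge {X : List α} (Y : List α) {q s : ℕ} (h : X.length ≤ s) :
    window (X ++ Y) q s = window Y q (s - X.length) := by
  simp [window, List.drop_append, List.drop_eq_nil_of_le h]

def subwords (q : ℕ) (X : List α) : Set (List α) := {w | w.length = q ∧ w <:+: X}

theorem subwords_subset_windows [DecidableEq α] (q : ℕ) (X : List α) :
    subwords q X ⊆ ↑((Finset.range (X.length + 1)).image (window X q)) := by
  rintro w ⟨rfl, hw⟩
  obtain ⟨s, hs, hsw⟩ := exists_window_eq hw
  exact Finset.mem_coe.2 (Finset.mem_image.2 ⟨s, Finset.mem_range.2 (by omega), hsw⟩)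

theorem subwords_finite (q : ℕ) (X : List α) : (subwords q X).Finite := by
  classical exact (Finset.finite_toSet _).subset (subwords_subset_windows q X)

theorem ncard_le_card_add_ncard [DecidableEq α] {S T : Set α} (F : Finset α)
    (h : S ⊆ ↑F ∪ T) (hT : T.Finite) : S.ncard ≤ F.card + T.ncard :=
  (Set.ncard_le_ncard h ((Finset.finite_toSet F).union hT)).trans
    ((Set.ncard_union_le _ _).trans (by rw [Set.ncard_coe_finset]))

theorem card_image_window_range_le [DecidableEq α] (X : List α) (q n : ℕ) :
    ((Finset.range n).image (window X q)).card ≤ n :=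
  Finset.card_image_le.trans (Finset.card_range n).le

theorem ncard_subwords_le (q : ℕ) (X : List α) : (subwords q X).ncard ≤ X.length + 1 := by
  classical
  exact (Set.ncard_le_ncard (subwords_subset_windows q X) (Finset.finite_toSet _)).trans
    ((Set.ncard_coe_finset _).trans_le (card_image_window_range_le X q _))

theorem ncard_subwords_append_le (q : ℕ) (P X : List α) :
    (subwords q (P ++ X)).ncard ≤ P.length + (subwords q X).ncard := by
  classical
  refine (ncard_le_card_add_ncard ((Finset.range P.length).image (window (P ++ X) q)) ?_
    (subwords_finite q X)).trans (Nat.add_le_add_right (card_image_window_range_le _ _ _) _)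
  rintro w ⟨rfl, hw⟩
  obtain ⟨s, hs, hsw⟩ := exists_window_eq hw
  by_cases hsP : s < P.length
  · exact Or.inl (Finset.mem_coe.2 (Finset.mem_image.2 ⟨s, Finset.mem_range.2 hsP, hsw⟩))
  · rw [window_append_of_ge X (by omega)] at hsw
    exact Or.inr ⟨rfl, hsw ▸ window_infix _ _ _⟩

theorem subwords_wpow_succ_append_subset {V : List α} (X : List α) {q a : ℕ}
    (h : q + V.length ≤ a * V.length) :
    subwords q (wpow V (a + 1) ++ X) ⊆ subwords q (wpow V a ++ X) := by
  rintro w ⟨rfl, hw⟩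
  refine ⟨rfl, ?_⟩
  obtain ⟨s, hs, hsw⟩ := exists_window_eq hw
  rw [← hsw]
  by_cases hsV : V.length ≤ s
  · rw [wpow_succ, List.append_assoc, window_append_of_ge _ hsV]
    exact window_infix _ _ _
  · rw [wpow_succ', List.append_assoc, window_append_of_le _ (by rw [length_wpow]; omega)]
    exact (window_infix _ _ _).trans (List.infix_append_left)

theorem ncard_subwords_wpow_append_le (q : ℕ) (V X : List α) (a : ℕ) :
    (subwords q (wpow V a ++ X)).ncard ≤ q + 2 * V.length + (subwords q X).ncard := by
  obtain rfl | hV := eq_or_ne V []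
  · simp [wpow]
  have hV : 0 < V.length := List.length_pos_iff.2 hV
  set k := q / V.length + 2
  have hk : k * V.length ≤ q + 2 * V.length := by
    have := Nat.div_mul_le_self q V.length; simp only [k, Nat.add_mul]; omega
  have hq : ∀ m, k ≤ m → q + V.length ≤ m * V.length := fun m hm => by
    have := Nat.lt_div_mul_add (a := q) hV
    have := Nat.mul_le_mul_right V.length hm; simp only [k, Nat.add_mul] at this; omega
  have hpeel : ∀ m ≤ k,
      (subwords q (wpow V m ++ X)).ncard ≤ q + 2 * V.length + (subwords q X).ncard :=
    fun m hm => (ncard_subwords_append_le q _ X).trans (by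
      rw [length_wpow]; have := Nat.mul_le_mul_right V.length hm; omega)
  rcases le_total a k with hak | hka
  · exact hpeel a hak
  refine le_trans (Set.ncard_le_ncard ?_ (subwords_finite _ _)) (hpeel k le_rfl)
  induction a, hka using Nat.le_induction with
  | base => exact le_rfl
  | succ m hkm ih => exact (subwords_wpow_succ_append_subset X (hq m hkm)).trans ih

theorem ncard_subwords_flatten_wpow_append_le (q a K : ℕ) (X : List α) :
    ∀ Vs : List (List α), (∀ V ∈ Vs, V.length ≤ K) →
      (subwords q ((Vs.map (wpow · a)).flatten ++ X)).ncard
        ≤ Vs.length * (q + 2 * K) + (subwords q X).ncard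
  | [], _ => by simp
  | V :: Vs, hK => by
    have ih := ncard_subwords_flatten_wpow_append_le q a K X Vs
      (fun V' hV' => hK V' (List.mem_cons_of_mem _ hV'))
    have hV := hK V List.mem_cons_self
    rw [List.map_cons, List.flatten_cons, List.append_assoc, List.length_cons]
    refine (ncard_subwords_wpow_append_le q V _ a).trans ?_
    have := Nat.mul_le_mul_left 2 hV
    linarith [Nat.add_one_mul Vs.length (q + 2 * K)]

end Words

section Blocks

@[simp] theorem length_ones (k : ℕ) : (ones k).length = k := List.length_replicate

theorem ones_add (m n : ℕ) : ones (m + n) = ones m ++ ones n := List.replicate_add ..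

theorem eq_ones_of_infix_ones {w : List Bool} {k : ℕ} (h : w <:+: ones k) :
    w = ones w.length :=
  (List.infix_replicate_iff.1 h).2

theorem infix_ones_append_of_le {w X : List Bool} {k L : ℕ} (hL : w.length ≤ L)
    (h : w <:+: ones k ++ X) : w <:+: ones L ++ X := by
  rcases List.infix_append_iff.1 h with h | h | ⟨x, y, rfl, hx, hy⟩
  · rw [eq_ones_of_infix_ones h]
    refine List.IsPrefix.isInfix ⟨ones (L - w.length) ++ X, ?_⟩
    rw [← List.append_assoc, ← ones_add, Nat.add_sub_cancel' hL]
  · exact h.trans List.infix_append_right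
  · have hxL : x.length ≤ L := by simp at hL; omega
    rw [eq_ones_of_infix_ones hx.isInfix]
    obtain ⟨r, rfl⟩ := hy
    refine ⟨ones (L - x.length), r, ?_⟩
    rw [← Nat.sub_add_cancel hxL, ones_add, Nat.add_sub_cancel]
    simp

def pad (q : ℕ) (X : List Bool) : List Bool := ones q ++ X ++ ones q

/-- The length-`q` word crossing a block `1^g` between two copies of `B`, starting `u` letters
before it. -/
def straddle (B : List Bool) (q u g : ℕ) : List Bool :=
  (ones q ++ B).rtake u ++ ones g ++ B.take (q - u - g)

theorem prefix_flatten_map_append (B : List Bool) (gs : List ℕ) :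
    B <+: (gs.map (B ++ ones ·)).flatten ++ B := by
  cases gs with
  | nil => simp
  | cons g gs => exact ⟨ones g ++ ((gs.map (B ++ ones ·)).flatten ++ B), by simp⟩

theorem infix_pad_flatten_cases (B : List Bool) {q : ℕ} {w : List Bool} (hw : w.length = q) :
    ∀ gs : List ℕ, (∀ g ∈ gs, q ≤ B.length + g) →
      w <:+: pad q ((gs.map (B ++ ones ·)).flatten ++ B) →
      w <:+: pad q B ∨ ∃ g ∈ gs, ∃ u, u + g < q ∧ w = straddle B q u g
  | [], _, h => Or.inl (by simpa using h)
  | g :: gs, hgs, h => by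
    have hsplit : pad q (((g :: gs).map (B ++ ones ·)).flatten ++ B)
        = (ones q ++ B) ++ (ones g ++ ((gs.map (B ++ ones ·)).flatten ++ B ++ ones q)) := by
      simp [pad]
    rw [hsplit, List.infix_append_iff] at h
    rcases h with h | h | ⟨x, y, rfl, hx, hy⟩
    · exact Or.inl (h.trans (List.prefix_append _ _).isInfix)
    · have h' := infix_ones_append_of_le hw.le h
      rw [← List.append_assoc] at h'
      rcases infix_pad_flatten_cases B hw gs (fun g' hg' => hgs g' (List.mem_cons_of_mem _ hg'))
        h' with h | ⟨g', hg', u, hu, rfl⟩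
      · exact Or.inl h
      · exact Or.inr ⟨g', List.mem_cons_of_mem _ hg', u, hu, rfl⟩
    · rw [List.length_append] at hw
      by_cases hyg : y.length ≤ g
      · -- `y` stays inside the block `1^g`, so it also fits into the final `1^q`
        left
        have hy1 : y <+: ones g :=
          List.prefix_of_prefix_length_le hy (List.prefix_append _ _) (by simpa using hyg)
        refine List.infix_append_iff.2 (Or.inr (Or.inr ⟨x, y, rfl, hx, ?_⟩))
        rw [(List.prefix_replicate_iff.1 hy1).2]
        exact List.prefix_replicate_iff.2 ⟨by simp; omega, by simp⟩
      · right
        obtain ⟨z, rfl⟩ : ones g <+: y :=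
          List.prefix_of_prefix_length_le (List.prefix_append _ _) hy (by simp; omega)
        simp only [List.length_append, length_ones] at hw hyg
        rw [List.append_assoc, List.prefix_append_right_inj] at hy
        have hz : z <+: B :=
          List.prefix_of_prefix_length_le hy ((prefix_flatten_map_append B gs).trans
            ⟨ones q, by simp⟩) (by
              have := hgs g List.mem_cons_self; omega)
        refine ⟨g, List.mem_cons_self, x.length, by omega, ?_⟩
        simp only [straddle, List.rtake]
        rw [← List.suffix_iff_eq_drop.1 hx, List.prefix_iff_eq_take.1 hz]
        simp [← hw, List.append_assoc]

end Blocks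

section Staircase

variable {a b c : ℕ → ℕ}

/-- The lengths of the blocks of ones in `B (n+1)`, read as `B n 1^{g₁} B n ⋯ 1^{g_k} B n`. -/
def gaps (a b c : ℕ → ℕ) (n : ℕ) : List ℕ :=
  ((List.range (b n)).map fun i => List.replicate (a n) (c n + i)).flatten

theorem exists_eq_of_mem_gaps {g n : ℕ} (h : g ∈ gaps a b c n) : ∃ i < b n, g = c n + i := by
  simp only [gaps, List.mem_flatten, List.mem_map, List.mem_range] at h
  obtain ⟨_, ⟨i, hi, rfl⟩, hg⟩ := h
  exact ⟨i, hi, List.eq_of_mem_replicate hg⟩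

theorem qsB_add_two (n : ℕ) :
    qsB a b c (n + 2) =
      ((gaps a b c (n + 1)).map (qsB a b c (n + 1) ++ ones ·)).flatten ++ qsB a b c (n + 1) := by
  simp only [qsB, gaps, wpow, List.map_flatten, List.map_map, List.flatten_flatten,
    Function.comp_def, List.map_replicate]

theorem qsB_prefix_qsB_add_one (n : ℕ) : qsB a b c n <+: qsB a b c (n + 1) := by
  rcases n with _ | n
  · exact List.nil_prefix
  · rw [qsB_add_two]; exact prefix_flatten_map_append _ _

theorem qsB_prefix_qsB_of_le {m n : ℕ} (h : m ≤ n) : qsB a b c m <+: qsB a b c n := by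
  induction n, h using Nat.le_induction with
  | base => exact List.prefix_refl _
  | succ n _ ih => exact ih.trans (qsB_prefix_qsB_add_one n)

theorem length_qsB (n : ℕ) : (qsB a b c (n + 1)).length = qsh a b c (n + 1) := by
  induction n with
  | zero => rfl
  | succ n ih =>
    have hsum : ((List.range (b (n + 1))).map
          fun i => a (n + 1) * (qsh a b c (n + 1) + c (n + 1) + i)).sum
        = a (n + 1) * b (n + 1) * (qsh a b c (n + 1) + c (n + 1))
          + a (n + 1) * ∑ i ∈ Finset.range (b (n + 1)), i := by
      change ∑ i ∈ Finset.range _, _ = _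
      simp only [Nat.mul_add, Finset.sum_add_distrib, Finset.mul_sum, Finset.sum_const,
        Finset.card_range, smul_eq_mul]
      ring
    have hgauss : a (n + 1) * b (n + 1) * (b (n + 1) - 1) / 2
        = a (n + 1) * ∑ i ∈ Finset.range (b (n + 1)), i := by
      rw [mul_assoc, ← Finset.sum_range_id_mul_two, ← mul_assoc, Nat.mul_div_cancel _ two_pos]
    rw [qsB, qsh, List.length_append, ih, List.length_flatten, List.map_map, hgauss]
    simp only [Function.comp_def, length_wpow, List.length_append, length_ones, ih, ← add_assoc]
    rw [hsum]
    ring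

/-- All blocks of ones in `B (n+2)` are at least `q` long. -/
theorem subwords_pad_qsB_add_two_subset {q n : ℕ} (hq : q ≤ c (n + 1)) :
    subwords q (pad q (qsB a b c (n + 2))) ⊆ subwords q (pad q (qsB a b c (n + 1))) := by
  rintro w ⟨hw, h⟩
  have hgaps : ∀ g ∈ gaps a b c (n + 1), q ≤ g := fun g hg => by
    obtain ⟨i, -, rfl⟩ := exists_eq_of_mem_gaps hg; omega
  rw [qsB_add_two] at h
  rcases infix_pad_flatten_cases _ hw _ (fun g hg => (hgaps g hg).trans (by omega)) h with
    h | ⟨g, hg, u, hu, -⟩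
  · exact ⟨hw, h⟩
  · exact absurd (hgaps g hg) (by omega)

theorem mem_subwords_pad_qsB_of_mem_qsL (hc : ∀ n, c (n + 1) ≤ c (n + 2)) {q n : ℕ}
    (hq : q ≤ c (n + 1)) {w : List Bool} (hw : w ∈ qsL a b c) (hwq : w.length = q) :
    w ∈ subwords q (pad q (qsB a b c (n + 1))) := by
  obtain ⟨j, -, hj⟩ := hw
  have hpad : ∀ m, qsB a b c m <:+: pad q (qsB a b c m) := fun m => List.infix_append _ _ _
  rcases le_total j (n + 1) with hjn | hnj
  · exact ⟨hwq, hj.trans ((qsB_prefix_qsB_of_le hjn).isInfix.trans (hpad _))⟩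
  suffices ∀ m, n + 1 ≤ m →
      subwords q (pad q (qsB a b c m)) ⊆ subwords q (pad q (qsB a b c (n + 1))) from
    this j hnj ⟨hwq, hj.trans (hpad j)⟩
  have hcm : Monotone fun m => c (m + 1) := monotone_nat_of_le_succ hc
  intro m hm
  induction m, hm using Nat.le_induction with
  | base => exact subset_rfl
  | succ m hm ih =>
    obtain ⟨m, rfl⟩ := Nat.exists_eq_add_of_le' (by omega : 1 ≤ m)
    exact (subwords_pad_qsB_add_two_subset (hq.trans (hcm (by omega)))).trans ih

/-- The new subwords are the words straddling a block of ones: at most `q` for each of the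
`b (n+1)` block lengths. -/
theorem ncard_subwords_pad_qsB_add_two_le_add {q n : ℕ}
    (hq : q ≤ (qsB a b c (n + 1)).length + c (n + 1)) :
    (subwords q (pad q (qsB a b c (n + 2)))).ncard
      ≤ (subwords q (pad q (qsB a b c (n + 1)))).ncard + q * b (n + 1) := by
  classical
  set B := qsB a b c (n + 1)
  let F := ((Finset.range q ×ˢ Finset.range (b (n + 1))).image
    fun p => straddle B q p.1 (c (n + 1) + p.2))
  have hcover : subwords q (pad q (qsB a b c (n + 2))) ⊆ ↑F ∪ subwords q (pad q B) := by
    rintro w ⟨hw, h⟩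
    rw [qsB_add_two] at h
    have hgaps : ∀ g ∈ gaps a b c (n + 1), q ≤ B.length + g := fun g hg => by
      obtain ⟨i, -, rfl⟩ := exists_eq_of_mem_gaps hg; omega
    rcases infix_pad_flatten_cases B hw _ hgaps h with h | ⟨g, hg, u, hu, rfl⟩
    · exact Or.inr ⟨hw, h⟩
    · obtain ⟨i, hi, rfl⟩ := exists_eq_of_mem_gaps hg
      refine Or.inl (Finset.mem_coe.2 (Finset.mem_image.2 ⟨(u, i), ?_, rfl⟩))
      exact Finset.mem_product.2 ⟨Finset.mem_range.2 (by omega), Finset.mem_range.2 hi⟩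
  refine (ncard_le_card_add_ncard F hcover (subwords_finite _ _)).trans ?_
  rw [add_comm]
  refine Nat.add_le_add_left (Finset.card_image_le.trans ?_) _
  simp

/-- Each of the `b (n+1)` periodic runs `(B (n+1) 1^{c (n+1) + i})^{a (n+1)}` contributes `O(q)`
subwords. -/
theorem ncard_subwords_pad_qsB_add_two_le_mul {q n : ℕ} (hbc : b (n + 1) ≤ c (n + 1))
    (hq : (qsB a b c (n + 1)).length + c (n + 1) ≤ q) :
    (subwords q (pad q (qsB a b c (n + 2)))).ncard ≤ q * (5 * b (n + 1) + 3) + 1 := by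
  set B := qsB a b c (n + 1)
  set Vs := (List.range (b (n + 1))).map fun i => B ++ ones (c (n + 1) + i)
  have hpad : pad q (qsB a b c (n + 2))
      = ones q ++ ((Vs.map (wpow · (a (n + 1)))).flatten ++ (B ++ ones q)) := by
    simp [pad, qsB, Vs, B, List.append_assoc, Function.comp_def]
  have hVs : ∀ V ∈ Vs, V.length ≤ 2 * q := by
    simp only [Vs, List.mem_map, List.mem_range]
    rintro _ ⟨i, hi, rfl⟩
    simp; omega
  have htail := ncard_subwords_le q (B ++ ones q)
  have hruns :=
    ncard_subwords_flatten_wpow_append_le q (a (n + 1)) (2 * q) (B ++ ones q) Vs hVs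
  have hprefix := ncard_subwords_append_le q (ones q)
    ((Vs.map (wpow · (a (n + 1)))).flatten ++ (B ++ ones q))
  rw [hpad]
  simp only [Vs, List.length_map, List.length_range, List.length_append, length_ones] at *
  nlinarith

theorem cplx_le {n q : ℕ} (hb : ∀ n, 1 ≤ b (n + 1)) (hbm : ∀ n, b (n + 1) ≤ b (n + 2))
    (hc : ∀ n, c (n + 1) ≤ c (n + 2)) (hbc : ∀ n, b (n + 1) ≤ c (n + 1))
    (hlag : qsh a b c (n + 1) + c (n + 1) ≤ c (n + 2)) (hq : c (n + 2) < q)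
    (hq' : q ≤ c (n + 3)) :
    cplx a b c q ≤ 10 * q * b (n + 2) := by
  have hlang : {w | w ∈ qsL a b c ∧ w.length = q} ⊆ subwords q (pad q (qsB a b c (n + 3))) :=
    fun w hw => mem_subwords_pad_qsB_of_mem_qsL hc hq' hw.1 hw.2
  refine (Set.ncard_le_ncard hlang (subwords_finite _ _)).trans ?_
  have h1 : 1 ≤ b (n + 2) := hb (n + 1)
  have h2 := hbm n
  by_cases hshort : (qsB a b c (n + 2)).length + c (n + 2) ≤ q
  · have := ncard_subwords_pad_qsB_add_two_le_mul (hbc (n + 1)) hshort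
    nlinarith
  · have hclimb : (subwords q (pad q (qsB a b c (n + 3)))).ncard
        ≤ (subwords q (pad q (qsB a b c (n + 2)))).ncard + q * b (n + 2) :=
      ncard_subwords_pad_qsB_add_two_le_add (n := n + 1) (not_le.1 hshort).le
    have hbase := ncard_subwords_pad_qsB_add_two_le_mul (a := a) (q := q) (hbc n)
      (by rw [length_qsB]; omega)
    nlinarith

end Staircase

theorem cast_div_le_cast_div {x y C v : ℕ} (hv : 0 < v) (h : v * x ≤ C * y) :
    (x : ℝ) / y ≤ C / v := by
  rcases Nat.eq_zero_or_pos y with rfl | hy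
  · simp only [Nat.cast_zero, div_zero]; positivity
  rw [div_le_div_iff₀ (by exact_mod_cast hy) (by exact_mod_cast hv)]
  exact_mod_cast (by linarith : x * v ≤ C * y)

def level (c : ℕ → ℕ) (q : ℕ) : ℕ := Nat.findGreatest (fun m => c m < q) q

theorem level_spec {c : ℕ → ℕ} (hc : ∀ m, m ≤ c m) {q : ℕ} (hq : c 0 < q) :
    c (level c q) < q ∧ q ≤ c (level c q + 1) := by
  refine ⟨Nat.findGreatest_spec (P := fun m => c m < q) (Nat.zero_le q) hq,
    not_lt.1 fun h => ?_⟩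
  have hle : level c q + 1 ≤ q := (hc _).trans h.le
  exact Nat.lt_irrefl _ (Nat.lt_of_succ_le (Nat.le_findGreatest hle h))

theorem tendsto_level {c : ℕ → ℕ} (hc : ∀ m, m ≤ c m) : Tendsto (level c) atTop atTop :=
  tendsto_atTop_atTop.2 fun N => ⟨c N + 1, fun q hq =>
    Nat.le_findGreatest ((hc N).trans (by omega)) (by omega : c N < q)⟩

section SlowSeq

variable {f : ℕ → ℕ}

open Classical in
noncomputable def slowSeq (f : ℕ → ℕ) : ℕ → ℕ
  | 0 => 1
  | n + 1 => if ∀ q ≥ n, (slowSeq f n + 1) ^ 2 ≤ f q then slowSeq f n + 1 else slowSeq f n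

theorem slowSeq_le_slowSeq_succ (n : ℕ) : slowSeq f n ≤ slowSeq f (n + 1) := by
  rw [slowSeq]; split_ifs <;> omega

theorem slowSeq_succ_le (n : ℕ) : slowSeq f (n + 1) ≤ slowSeq f n + 1 := by
  rw [slowSeq]; split_ifs <;> omega

theorem monotone_slowSeq : Monotone (slowSeq f) :=
  monotone_nat_of_le_succ slowSeq_le_slowSeq_succ

theorem one_le_slowSeq (n : ℕ) : 1 ≤ slowSeq f n := monotone_slowSeq (Nat.zero_le n)

theorem sq_slowSeq_le {n q : ℕ} (hb : 2 ≤ slowSeq f n) (hq : n ≤ q) :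
    slowSeq f n ^ 2 ≤ f q := by
  induction n generalizing q with
  | zero => simp [slowSeq] at hb
  | succ n ih =>
    rw [slowSeq] at hb ⊢
    split_ifs at hb ⊢ with h
    · exact h q (by omega)
    · exact ih hb (by omega)

theorem tendsto_slowSeq (hf : Tendsto f atTop atTop) : Tendsto (slowSeq f) atTop atTop := by
  refine tendsto_atTop_atTop_of_monotone monotone_slowSeq fun k => ?_
  induction k with
  | zero => exact ⟨0, Nat.zero_le _⟩
  | succ k ih =>
    obtain ⟨n, hn⟩ := ih
    obtain ⟨N, hN⟩ := eventually_atTop.1 (hf.eventually_ge_atTop ((k + 1) ^ 2))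
    refine ⟨max n N + 1, ?_⟩
    have hmono := monotone_slowSeq (f := f) (le_max_left n N)
    rw [slowSeq]
    split_ifs with h
    · omega
    · by_contra hlt
      have hk : slowSeq f (max n N) = k := by omega
      exact h fun q hq => hk ▸ hN q (le_of_max_le_right hq)

end SlowSeq

section Stair

variable {b : ℕ → ℕ}

/-- The pairs `(c n, h n)` for `a n = 2 ^ n`. Taking `c (n+1) = c n + b n + h n` keeps every
length-`q` subword within one climbing step of the base count, while `c` stays negligible
against `h`. -/
def stairSeq (b : ℕ → ℕ) : ℕ → ℕ × ℕ
  | 0 => (0, 0)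
  | 1 => (b 1, 1)
  | n + 2 =>
    ((stairSeq b (n + 1)).1 + b (n + 1) + (stairSeq b (n + 1)).2,
      (2 ^ (n + 1) * b (n + 1) + 1) * (stairSeq b (n + 1)).2
        + 2 ^ (n + 1) * b (n + 1) * (stairSeq b (n + 1)).1
        + 2 ^ (n + 1) * b (n + 1) * (b (n + 1) - 1) / 2)

def stairC (b : ℕ → ℕ) (n : ℕ) : ℕ := (stairSeq b n).1

def stairH (b : ℕ → ℕ) (n : ℕ) : ℕ := (stairSeq b n).2

theorem stairC_add_two (n : ℕ) :
    stairC b (n + 2) = stairC b (n + 1) + b (n + 1) + stairH b (n + 1) :=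
  rfl

theorem qsh_stairC (n : ℕ) : qsh (2 ^ ·) b (stairC b) n = stairH b n := by
  induction n using Nat.strong_induction_on with
  | _ n ih =>
    match n with
    | 0 => rfl
    | 1 => rfl
    | n + 2 => rw [qsh, ih (n + 1) (by omega)]; rfl

theorem mul_stairC_add_stairH_le (n : ℕ) :
    2 ^ (n + 1) * b (n + 1) * (stairC b (n + 1) + stairH b (n + 1)) ≤ stairH b (n + 2) := by
  change _ ≤ (2 ^ (n + 1) * b (n + 1) + 1) * stairH b (n + 1)
    + 2 ^ (n + 1) * b (n + 1) * stairC b (n + 1) + _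
  generalize 2 ^ (n + 1) * b (n + 1) = A
  generalize A * (b (n + 1) - 1) / 2 = R
  nlinarith

theorem one_le_stairH (hb : ∀ n, 1 ≤ b n) (n : ℕ) : 1 ≤ stairH b (n + 1) := by
  induction n with
  | zero => exact le_rfl
  | succ n ih =>
    refine ih.trans (le_trans ?_ (mul_stairC_add_stairH_le n))
    have hA : 1 ≤ 2 ^ (n + 1) * b (n + 1) := Nat.one_le_iff_ne_zero.2 (by
      have := hb (n + 1); positivity)
    nlinarith

theorem le_stairC (hb : ∀ n, 1 ≤ b n) (n : ℕ) : n ≤ stairC b n := by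
  induction n with
  | zero => exact Nat.zero_le _
  | succ n ih =>
    rcases n with _ | n
    · exact hb 1
    · rw [stairC_add_two]; have := hb (n + 1); omega

theorem b_le_stairC (hb : ∀ n, 1 ≤ b n) (hbs : ∀ n, b (n + 1) ≤ b n + 1) (n : ℕ) :
    b (n + 1) ≤ stairC b (n + 1) := by
  induction n with
  | zero => exact le_rfl
  | succ n ih =>
    show b (n + 2) ≤ stairC b (n + 2)
    have hs : b (n + 2) ≤ b (n + 1) + 1 := hbs (n + 1)
    have := one_le_stairH hb n
    rw [stairC_add_two]; omega

theorem two_pow_mul_stairC_add_le (hb : ∀ n, 1 ≤ b n) (hbs : ∀ n, b (n + 1) ≤ b n + 1)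
    (n : ℕ) : 2 ^ n * (stairC b (n + 2) + b (n + 2)) ≤ 4 * stairH b (n + 2) := by
  have hsum : stairC b (n + 2) + b (n + 2) ≤ 4 * (stairC b (n + 1) + stairH b (n + 1)) := by
    have h2 : b (n + 2) ≤ stairC b (n + 2) := b_le_stairC hb hbs (n + 1)
    have h1 := b_le_stairC hb hbs n
    rw [stairC_add_two] at *; omega
  have hpow : 2 ^ n ≤ 2 ^ (n + 1) * b (n + 1) :=
    (Nat.pow_le_pow_right two_pos n.le_succ).trans (Nat.le_mul_of_pos_right _ (hb (n + 1)))
  calc 2 ^ n * (stairC b (n + 2) + b (n + 2))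
      ≤ 2 ^ (n + 1) * b (n + 1) * (4 * (stairC b (n + 1) + stairH b (n + 1))) :=
        Nat.mul_le_mul hpow hsum
    _ = 4 * (2 ^ (n + 1) * b (n + 1) * (stairC b (n + 1) + stairH b (n + 1))) := by ring
    _ ≤ 4 * stairH b (n + 2) := Nat.mul_le_mul_left _ (mul_stairC_add_stairH_le n)

theorem two_pow_mul_two_pow_mul_sq_le (hb : ∀ n, 1 ≤ b n) (hbs : ∀ n, b (n + 1) ≤ b n + 1)
    (n : ℕ) : 2 ^ n * (2 ^ (n + 3) * b (n + 3) ^ 2) ≤ 9 * stairH b (n + 3) := by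
  have h1 : 2 ^ (n + 1) * b (n + 1) ^ 2 ≤ stairH b (n + 2) :=
    calc 2 ^ (n + 1) * b (n + 1) ^ 2 = 2 ^ (n + 1) * b (n + 1) * b (n + 1) := by ring
      _ ≤ 2 ^ (n + 1) * b (n + 1) * (stairC b (n + 1) + stairH b (n + 1)) :=
        Nat.mul_le_mul_left _ ((b_le_stairC hb hbs n).trans (Nat.le_add_right _ _))
      _ ≤ stairH b (n + 2) := mul_stairC_add_stairH_le n
  have h2 : 2 ^ (n + 2) * stairH b (n + 2) ≤ stairH b (n + 3) :=
    calc 2 ^ (n + 2) * stairH b (n + 2)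
        ≤ 2 ^ (n + 2) * b (n + 2) * (stairC b (n + 2) + stairH b (n + 2)) :=
          Nat.mul_le_mul (Nat.le_mul_of_pos_right _ (hb (n + 2))) (Nat.le_add_left _ _)
      _ ≤ stairH b (n + 3) := mul_stairC_add_stairH_le (n + 1)
  have h3 : b (n + 3) ^ 2 ≤ 9 * b (n + 1) ^ 2 := by
    have : b (n + 3) ≤ 3 * b (n + 1) := by
      have : b (n + 2) ≤ b (n + 1) + 1 := hbs (n + 1)
      have : b (n + 3) ≤ b (n + 2) + 1 := hbs (n + 2)
      have := hb (n + 1); omega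
    nlinarith
  calc 2 ^ n * (2 ^ (n + 3) * b (n + 3) ^ 2) ≤ 2 ^ n * (2 ^ (n + 3) * (9 * b (n + 1) ^ 2)) :=
        Nat.mul_le_mul_left _ (Nat.mul_le_mul_left _ h3)
    _ = 9 * (2 ^ (n + 2) * (2 ^ (n + 1) * b (n + 1) ^ 2)) := by ring
    _ ≤ 9 * stairH b (n + 3) := Nat.mul_le_mul_left _ ((Nat.mul_le_mul_left _ h1).trans h2)


theorem qShyp_stair (hb : ∀ n, 1 ≤ b n) (hbm : Monotone b) (hbt : Tendsto b atTop atTop) :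
    QShyp (2 ^ ·) b (stairC b) := by
  refine ⟨fun n _ => ⟨Nat.one_le_two_pow, Nat.pow_le_pow_right two_pos n.le_succ⟩,
    tendsto_pow_atTop_atTop_of_one_lt one_lt_two, fun n _ => ⟨hb n, hbm n.le_succ⟩, hbt,
    fun n hn => ⟨(le_stairC hb n).trans' hn, ?_⟩,
    tendsto_atTop_mono (le_stairC hb) tendsto_id, fun n hn => ?_⟩ <;>
  · obtain ⟨n, rfl⟩ := Nat.exists_eq_add_of_le' hn
    rw [stairC_add_two]; omega

theorem tendsto_stair_mul_sq_div (hb : ∀ n, 1 ≤ b n) (hbs : ∀ n, b (n + 1) ≤ b n + 1) :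
    Tendsto (fun n => ((2 ^ n * b n ^ 2 : ℕ) : ℝ) / (qsh (2 ^ ·) b (stairC b) n : ℝ))
      atTop (𝓝 0) := by
  simp only [qsh_stairC]
  refine (tendsto_add_atTop_iff_nat 3).1 (squeeze_zero (fun n => by positivity) (fun n =>
    cast_div_le_cast_div (Nat.two_pow_pos n) (two_pow_mul_two_pow_mul_sq_le hb hbs n)) ?_)
  push_cast
  exact tendsto_const_nhds.div_atTop (tendsto_pow_atTop_atTop_of_one_lt one_lt_two)

theorem summable_stair_add_div (hb : ∀ n, 1 ≤ b n) (hbs : ∀ n, b (n + 1) ≤ b n + 1) :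
    Summable fun n => ((stairC b n + b n : ℕ) : ℝ) / (qsh (2 ^ ·) b (stairC b) n : ℝ) := by
  simp only [qsh_stairC]
  refine (summable_nat_add_iff 2).1 (Summable.of_nonneg_of_le (fun n => by positivity)
    (fun n => cast_div_le_cast_div (Nat.two_pow_pos n) (two_pow_mul_stairC_add_le hb hbs n)) ?_)
  simpa [div_eq_mul_inv] using summable_geometric_two.mul_left 4

end Stair

theorem tendsto_cplx_stair_div {f : ℕ → ℕ} (hf : Tendsto f atTop atTop) :
    Tendsto (fun q => ((cplx (2 ^ ·) (slowSeq f) (stairC (slowSeq f)) q : ℕ) : ℝ)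
      / ((q * f q : ℕ) : ℝ)) atTop (𝓝 0) := by
  set b := slowSeq f
  set c := stairC b
  have hb := one_le_slowSeq (f := f)
  have hc : ∀ m, m ≤ c m := le_stairC hb
  have hL := tendsto_level hc
  have hbL : Tendsto (fun q => b (level c q)) atTop atTop := (tendsto_slowSeq hf).comp hL
  refine squeeze_zero' (Eventually.of_forall fun q => by positivity) ?_
    ((tendsto_const_div_atTop_nhds_zero_nat (10 : ℝ)).comp (tendsto_natCast_atTop_atTop.comp hbL))
  filter_upwards [hL.eventually_ge_atTop 2, hbL.eventually_ge_atTop 2] with q hq2 hb2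
  obtain ⟨n, hn⟩ := Nat.exists_eq_add_of_le' hq2
  have hq : c 0 < q := (Nat.zero_le _).trans_lt ((hq2.trans (Nat.findGreatest_le q)))
  obtain ⟨hlt, hle⟩ := level_spec hc hq
  rw [hn] at hlt hle hb2
  have hcount := cplx_le (a := (2 ^ ·)) (fun n => hb (n + 1))
    (fun n => slowSeq_le_slowSeq_succ _) (fun n => by rw [stairC_add_two]; omega)
    (fun n => b_le_stairC hb slowSeq_succ_le n) (by rw [qsh_stairC, stairC_add_two]; omega)
    hlt hle
  have hsq := sq_slowSeq_le hb2 ((hc (n + 2)).trans hlt.le)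
  simp only [Function.comp_apply, hn]
  refine cast_div_le_cast_div (hb _) ?_
  calc b (n + 2) * cplx (2 ^ ·) b c q ≤ b (n + 2) * (10 * q * b (n + 2)) :=
        Nat.mul_le_mul_left _ hcount
    _ = 10 * (q * b (n + 2) ^ 2) := by ring
    _ ≤ 10 * (q * f q) := Nat.mul_le_mul_left _ (Nat.mul_le_mul_left _ hsq)

end QuasiStaircase

open QuasiStaircase

/-- For any `f : ℕ → ℕ` with `f q → ∞`, there is a quasi-staircase (given by
nondecreasing sequences of positive integers `a`, `b`, `c` tending to infinity with
`c 1 ≥ 1` and `c (n+1) ≥ c n + b n`) satisfying `a n * b n ^ 2 / h n → 0` and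
`∑ (c n + b n) / h n < ∞`, whose word complexity satisfies `p q / (q * f q) → 0`. -/
theorem qs_complexity_close_to_linear (f : ℕ → ℕ)
    (hf : Tendsto f atTop atTop) :
    ∃ a b c : ℕ → ℕ, QShyp a b c ∧
      Tendsto (fun n => ((a n * b n ^ 2 : ℕ) : ℝ) / ((qsh a b c n : ℕ) : ℝ))
        atTop (nhds 0) ∧
      Summable (fun n => (((c n + b n : ℕ)) : ℝ) / ((qsh a b c n : ℕ) : ℝ)) ∧
      Tendsto (fun q => ((cplx a b c q : ℕ) : ℝ) / (((q * f q : ℕ)) : ℝ))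
        atTop (nhds 0) :=
  ⟨(2 ^ ·), slowSeq f, stairC (slowSeq f),
    qShyp_stair one_le_slowSeq monotone_slowSeq (tendsto_slowSeq hf),
    tendsto_stair_mul_sq_div one_le_slowSeq slowSeq_succ_le,
    summable_stair_add_div one_le_slowSeq slowSeq_succ_le, tendsto_cplx_stair_div hf⟩
end
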